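/- Let m, n ∈ ℕ with n ≥ m ≥ 1. For every bihomogeneous B ∈ S of bidegree (m−1, n+1) there exists a bihomogeneous A ∈ S of bidegree (m,n) with δ(A) = B. -/

import Mathlib

/-!
The operators `δ = ∑ Xᵢ ∂/∂Yᵢ` and `ε = ∑ Yᵢ ∂/∂Xᵢ` behave like the raising and lowering
operators of `sl₂`: `δε - εδ` is the difference of the Euler operators in `X` and in `Y`, so it
acts on bidegree `(a, b)` as multiplication by `b - a`, and `δ` kills bidegree `(0, b)`. From
these facts alone, induction on `a` shows that `εδ + μ` is surjective on bidegree `(a, b)` for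
every integer `μ > 0` when `a ≤ b + 1`. Given `B` of bidegree `(m - 1, n + 1)`, solve
`εδ C + (n - m + 2) C = B`; then `δ(εC) = εδ C + (n - m + 2) C = B`, and `A = εC` has
bidegree `(m, n)`.
-/

open MvPolynomial

noncomputable section

/-- The polynomial ring `ℂ[Y₀,…,Y_N,X₀,…,X_N]`: the left copy of `Fin (N+1)` indexes the
`Y`-variables, the right copy indexes the `X`-variables. -/
abbrev S (N : ℕ) : Type := MvPolynomial (Fin (N + 1) ⊕ Fin (N + 1)) ℂ

/-- Weight giving `1` to each `Yᵢ` and `0` to each `Xᵢ`. -/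
def wY (N : ℕ) : (Fin (N + 1) ⊕ Fin (N + 1)) → ℕ := Sum.elim (fun _ => 1) (fun _ => 0)

/-- Weight giving `0` to each `Yᵢ` and `1` to each `Xᵢ`. -/
def wX (N : ℕ) : (Fin (N + 1) ⊕ Fin (N + 1)) → ℕ := Sum.elim (fun _ => 0) (fun _ => 1)

/-- `A` is bihomogeneous of bidegree `(m, n)`. -/
def Bihom (N m n : ℕ) (A : S N) : Prop :=
  A.IsWeightedHomogeneous (wY N) m ∧ A.IsWeightedHomogeneous (wX N) n

/-- The operator `δ(A) = ∑ᵢ Xᵢ · ∂A/∂Yᵢ`. -/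
def deltaOp (N : ℕ) (A : S N) : S N :=
  ∑ i : Fin (N + 1), X (Sum.inr i) * pderiv (Sum.inl i) A

/-- The quadratic polynomial `q = ∑ᵢ Xᵢ·Yᵢ`. -/
def qPoly (N : ℕ) : S N := ∑ i : Fin (N + 1), X (Sum.inr i) * X (Sum.inl i)

end

namespace MvPolynomial

variable {R σ : Type*} [CommSemiring R] {φ : MvPolynomial σ R}

lemma pderiv_eq_zero_of_isWeightedHomogeneous_zero {w : σ → ℕ} {i : σ} (hi : w i ≠ 0)
    (h : φ.IsWeightedHomogeneous w 0) : pderiv i φ = 0 := by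
  ext d
  rw [coeff_pderiv, coeff_zero]
  by_contra hd
  have := h (left_ne_zero_of_mul hd)
  rw [map_add, Finsupp.weight_single, one_smul] at this
  omega

lemma IsWeightedHomogeneous.X_mul_pderiv {w : σ → ℕ} {i j : σ} {k n : ℕ}
    (h : φ.IsWeightedHomogeneous w (k + w i)) (hk : w j + k = n) :
    (X j * pderiv i φ).IsWeightedHomogeneous w n :=
  hk ▸ (isWeightedHomogeneous_X R w j).mul (h.pderiv rfl)

section Polarization

variable {ι : Type*} [Fintype ι]

noncomputable def polarization (u v : ι → σ) :
    Derivation R (MvPolynomial σ R) (MvPolynomial σ R) :=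
  ∑ k, (X (v k) : MvPolynomial σ R) • pderiv (u k)

lemma polarization_apply (u v : ι → σ) (p : MvPolynomial σ R) :
    polarization u v p = ∑ k, X (v k) * pderiv (u k) p := by
  rw [polarization, ← Derivation.coeFnAddMonoidHom_apply, map_sum]
  simp

end Polarization

end MvPolynomial

section Sl2

variable {K V : Type*} [Field K] [CharZero K] [AddCommGroup V] [Module K V]

structure IsSl2Bigrading (W : ℕ → ℕ → Submodule K V) (e f : V →ₗ[K] V) : Prop where
  apply_e_mem : ∀ a b, ∀ v ∈ W (a + 1) b, e v ∈ W a (b + 1)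
  apply_e_eq_zero : ∀ b, ∀ v ∈ W 0 b, e v = 0
  apply_f_mem : ∀ a b, ∀ v ∈ W a (b + 1), f v ∈ W (a + 1) b
  ef_sub_fe : ∀ a b, ∀ v ∈ W a b, e (f v) - f (e v) = ((b : K) - a) • v

namespace IsSl2Bigrading

variable {W : ℕ → ℕ → Submodule K V} {e f : V →ₗ[K] V}

theorem exists_mem_fe_add_smul_eq (h : IsSl2Bigrading W e f) {a b μ : ℕ} (hab : a ≤ b + 1)
    (hμ : μ ≠ 0) {v : V} (hv : v ∈ W a b) : ∃ u ∈ W a b, f (e u) + (μ : K) • u = v := by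
  induction a generalizing b μ v with
  | zero =>
    have hμK : (μ : K) ≠ 0 := Nat.cast_ne_zero.mpr hμ
    refine ⟨(μ : K)⁻¹ • v, (W 0 b).smul_mem _ hv, ?_⟩
    rw [h.apply_e_eq_zero b _ ((W 0 b).smul_mem _ hv), map_zero, zero_add, smul_inv_smul₀ hμK]
  | succ a ih =>
    -- Solve one step down for `e v`, with the shift enlarged by the weight `b + 1 - a` there;
    -- then `e (f c) = e v - μ • c`, so `μ⁻¹ • (v - f c)` is a solution.
    obtain ⟨c, hc, hce⟩ :=
      ih (μ := μ + (b + 1 - a)) (by omega) (by omega) (h.apply_e_mem a b v hv)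
    have hefc : e (f c) = e v - (μ : K) • c := by
      have hcomm := sub_eq_iff_eq_add.mp (h.ef_sub_fe a (b + 1) c hc)
      rw [← hce, hcomm]
      push_cast [Nat.cast_sub (show a ≤ b + 1 by omega)]
      module
    have hμK : (μ : K) ≠ 0 := Nat.cast_ne_zero.mpr hμ
    refine ⟨(μ : K)⁻¹ • (v - f c),
      (W (a + 1) b).smul_mem _ (sub_mem hv (h.apply_f_mem a b c hc)), ?_⟩
    rw [map_smul, map_sub, hefc, sub_sub_cancel, map_smul, map_smul, inv_smul_smul₀ hμK,
      smul_inv_smul₀ hμK, add_sub_cancel]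

theorem exists_mem_apply_e_eq (h : IsSl2Bigrading W e f) {a b : ℕ} (hab : a ≤ b) {v : V}
    (hv : v ∈ W a (b + 1)) : ∃ u ∈ W (a + 1) b, e u = v := by
  obtain ⟨w, hw, hwv⟩ := h.exists_mem_fe_add_smul_eq (μ := b + 1 - a) (by omega) (by omega) hv
  refine ⟨f w, h.apply_f_mem a b w hw, ?_⟩
  rw [← hwv, sub_eq_iff_eq_add'.mp (h.ef_sub_fe a (b + 1) w hw)]
  push_cast [Nat.cast_sub (show a ≤ b + 1 by omega)]
  rfl

end IsSl2Bigrading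

end Sl2

noncomputable def bihomSubmodule (N a b : ℕ) : Submodule ℂ (S N) :=
  weightedHomogeneousSubmodule ℂ (wY N) a ⊓ weightedHomogeneousSubmodule ℂ (wX N) b

noncomputable def deltaDer (N : ℕ) : Derivation ℂ (S N) (S N) :=
  polarization (σ := Fin (N + 1) ⊕ Fin (N + 1)) Sum.inl Sum.inr

noncomputable def epsDer (N : ℕ) : Derivation ℂ (S N) (S N) :=
  polarization (σ := Fin (N + 1) ⊕ Fin (N + 1)) Sum.inr Sum.inl

variable {N : ℕ}

lemma deltaOp_eq_deltaDer (A : S N) : deltaOp N A = deltaDer N A := by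
  rw [deltaDer, polarization_apply]
  rfl

lemma lie_deltaDer_epsDer :
    ⁅deltaDer N, epsDer N⁆ = polarization Sum.inr Sum.inr - polarization Sum.inl Sum.inl := by
  refine derivation_ext fun k => ?_
  rcases k with k | k <;>
    simp [deltaDer, epsDer, Derivation.commutator_apply, polarization_apply, pderiv_X,
      Pi.single_apply]

lemma polarization_inl_inl_eq_nsmul {a : ℕ} {A : S N}
    (hA : A.IsWeightedHomogeneous (wY N) a) : polarization Sum.inl Sum.inl A = a • A := by
  rw [polarization_apply, ← hA.sum_weight_X_mul_pderiv, Fintype.sum_sum_type]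
  simp [wY]

lemma polarization_inr_inr_eq_nsmul {b : ℕ} {A : S N}
    (hA : A.IsWeightedHomogeneous (wX N) b) : polarization Sum.inr Sum.inr A = b • A := by
  rw [polarization_apply, ← hA.sum_weight_X_mul_pderiv, Fintype.sum_sum_type]
  simp [wX]

section Bihom

variable {a b : ℕ} {A : S N}

lemma bihom_deltaDer (hA : Bihom N (a + 1) b A) : Bihom N a (b + 1) (deltaDer N A) := by
  rw [deltaDer, polarization_apply]
  exact ⟨IsWeightedHomogeneous.sum _ _ _ fun i _ => hA.1.X_mul_pderiv (zero_add a),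
    IsWeightedHomogeneous.sum _ _ _ fun i _ => hA.2.X_mul_pderiv (add_comm 1 b)⟩

lemma bihom_epsDer (hA : Bihom N a (b + 1) A) : Bihom N (a + 1) b (epsDer N A) := by
  rw [epsDer, polarization_apply]
  exact ⟨IsWeightedHomogeneous.sum _ _ _ fun i _ => hA.1.X_mul_pderiv (add_comm 1 a),
    IsWeightedHomogeneous.sum _ _ _ fun i _ => hA.2.X_mul_pderiv (zero_add b)⟩

lemma deltaDer_eq_zero_of_bihom (hA : Bihom N 0 b A) : deltaDer N A = 0 := by
  rw [deltaDer, polarization_apply]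
  exact Finset.sum_eq_zero fun i _ => by
    rw [pderiv_eq_zero_of_isWeightedHomogeneous_zero (w := wY N) one_ne_zero hA.1, mul_zero]

lemma deltaDer_epsDer_sub_epsDer_deltaDer (hA : Bihom N a b A) :
    deltaDer N (epsDer N A) - epsDer N (deltaDer N A) = ((b : ℂ) - a) • A := by
  rw [← Derivation.commutator_apply, lie_deltaDer_epsDer, Derivation.sub_apply,
    polarization_inr_inr_eq_nsmul hA.2, polarization_inl_inl_eq_nsmul hA.1, sub_smul,
    Nat.cast_smul_eq_nsmul, Nat.cast_smul_eq_nsmul]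

end Bihom

lemma isSl2Bigrading_bihomSubmodule :
    IsSl2Bigrading (bihomSubmodule N) (deltaDer N) (epsDer N) where
  apply_e_mem _ _ _ := bihom_deltaDer
  apply_e_eq_zero _ _ := deltaDer_eq_zero_of_bihom
  apply_f_mem _ _ _ := bihom_epsDer
  ef_sub_fe _ _ _ := deltaDer_epsDer_sub_epsDer_deltaDer

theorem statement5_general (N : ℕ) (m n : ℕ) (hm : 1 ≤ m) (hmn : m ≤ n)
    (B : S N) (hB : Bihom N (m - 1) (n + 1) B) :
    ∃ A : S N, Bihom N m n A ∧ deltaOp N A = B := by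
  obtain ⟨A, hA, hAB⟩ :=
    isSl2Bigrading_bihomSubmodule.exists_mem_apply_e_eq (show m - 1 ≤ n by omega) hB
  rw [Nat.sub_add_cancel hm] at hA
  exact ⟨A, hA, (deltaOp_eq_deltaDer A).trans hAB⟩

/-- For `n ≥ m ≥ 1`, every bihomogeneous `B` of bidegree `(m−1, n+1)` is
`δ(A)` for some bihomogeneous `A` of bidegree `(m, n)`. -/
theorem statement5 (N : ℕ) (hN : 2 ≤ N) (m n : ℕ) (hm : 1 ≤ m) (hmn : m ≤ n)
    (B : S N) (hB : Bihom N (m - 1) (n + 1) B) :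
    ∃ A : S N, Bihom N m n A ∧ deltaOp N A = B :=
  statement5_general N m n hm hmn B hB
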